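/- Conversely to the necessity direction: let H be a graph on U ∪ {r} with r ∉ U and 𝒰 a grouping of U in H. Suppose the union P of all 2-element stable sets of H[U] is fully adjacent to r and contained in some A ∈ 𝒰 (or P = ∅). Then for every nonnegative inclusion-wise non-increasing function d on the stable sets of the pattern of 𝒰, setting σ = d(Ā), γ_r = d(∅̄) − d(Ā), γ_u = d({u}̄) − d(Ā) for u ∈ U adjacent to r, and γ_u = d({u}̄) − d(∅̄) for u ∈ U not adjacent to r, the triple (H, γ, σ) linearizes d ∘ (S ↦ S̄). -/
import Mathlib


open Finset
open scoped Classical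

variable {V : Type*} [Fintype V] [DecidableEq V]

/-- A stable (independent) set. -/
def IsStable (G : SimpleGraph V) (S : Finset V) : Prop :=
  ∀ a ∈ S, ∀ b ∈ S, ¬ G.Adj a b

/-- Two sets are adjacent if some vertex of one is adjacent to some vertex of the other. -/
def SetsAdj (G : SimpleGraph V) (X Y : Finset V) : Prop :=
  ∃ x ∈ X, ∃ y ∈ Y, G.Adj x y

/-- `X` is fully adjacent to `Y`. -/
def FullyAdj (G : SimpleGraph V) (X Y : Finset V) : Prop :=
  ∀ x ∈ X, ∀ y ∈ Y, G.Adj x y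

/-- The neighborhood of a set `X`. -/
noncomputable def nbhd (G : SimpleGraph V) (X : Finset V) : Finset V :=
  (Finset.univ \ X).filter (fun v => ∃ x ∈ X, G.Adj v x)

/-- A group of `G`. -/
noncomputable def IsGroup (G : SimpleGraph V) (X : Finset V) : Prop :=
  X.Nonempty ∧ FullyAdj G X (nbhd G X)

/-- `𝒰` is a grouping of `U` in `G`. -/
noncomputable def IsGrouping (G : SimpleGraph V) (U : Finset V) (𝒰 : Finset (Finset V)) : Prop :=
  𝒰.sup id = U ∧ (∀ X ∈ 𝒰, ∀ Y ∈ 𝒰, X ≠ Y → Disjoint X Y) ∧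
  (∀ X ∈ 𝒰, IsGroup G X) ∧
  (∀ X ∈ 𝒰, ∀ Y ∈ 𝒰, X ≠ Y → SetsAdj G X Y → FullyAdj G X Y)

/-- A collection of groups is stable in the pattern graph if its members are
pairwise nonadjacent. -/
def PatStable (G : SimpleGraph V) (𝒮 : Finset (Finset V)) : Prop :=
  ∀ X ∈ 𝒮, ∀ Y ∈ 𝒮, X ≠ Y → ¬ SetsAdj G X Y

/-- `S̄`: the members of `𝒰` meeting `S`. -/
noncomputable def bar (𝒰 : Finset (Finset V)) (S : Finset V) : Finset (Finset V) :=
  𝒰.filter (fun X => (X ∩ S).Nonempty)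

/-- `(H, γ, σ)` linearizes `d ∘ bar`: for each stable set `T` of `H[U]`, the
maximum of `γ(S)` over stable sets `S` of `H` with `S ∩ U = T` is `d(T̄) - σ`. -/
noncomputable def Linearizes (H : SimpleGraph V) (U : Finset V) (𝒰 : Finset (Finset V))
    (γ : V → ℝ) (σ : ℝ) (d : Finset (Finset V) → ℝ) : Prop :=
  ∀ T : Finset V, T ⊆ U → IsStable H T →
    IsGreatest {r : ℝ | ∃ S : Finset V, IsStable H S ∧ S ∩ U = T ∧
      r = ∑ v ∈ S, γ v} (d (bar 𝒰 T) - σ)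

/-- `d` is nonnegative and inclusion-wise non-increasing on stable sets of the pattern. -/
noncomputable def NonnegNonincr (G : SimpleGraph V) (𝒰 : Finset (Finset V))
    (d : Finset (Finset V) → ℝ) : Prop :=
  (∀ 𝒮 ⊆ 𝒰, PatStable G 𝒮 → 0 ≤ d 𝒮) ∧
  (∀ 𝒮 ⊆ 𝒰, ∀ 𝒮' ⊆ 𝒰, PatStable G 𝒮 → PatStable G 𝒮' → 𝒮 ⊆ 𝒮' → d 𝒮' ≤ d 𝒮)

lemma bar_empty' (𝒰 : Finset (Finset V)) : bar 𝒰 (∅ : Finset V) = ∅ := by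
  simp [bar]

lemma bar_of_subset' {𝒰 : Finset (Finset V)} {A T : Finset V}
    (hdisj : ∀ X ∈ 𝒰, ∀ Y ∈ 𝒰, X ≠ Y → Disjoint X Y)
    (hA : A ∈ 𝒰) (hT : T ⊆ A) (hTne : T.Nonempty) : bar 𝒰 T = {A} := by
  ext X
  simp only [bar, Finset.mem_filter, Finset.mem_singleton]
  constructor
  · rintro ⟨hX, y, hy⟩
    by_contra hne
    rw [Finset.mem_inter] at hy
    exact (Finset.disjoint_left.mp (hdisj X hX A hA hne) hy.1 (hT hy.2))
  · rintro rfl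
    exact ⟨hA, by rwa [Finset.inter_eq_right.mpr hT]⟩

lemma IsStable.insert' {G : SimpleGraph V} {S : Finset V} {v : V}
    (hS : IsStable G S) (hv : ∀ u ∈ S, ¬ G.Adj v u) : IsStable G (insert v S) := by
  intro a ha b hb hab
  rw [Finset.mem_insert] at ha hb
  rcases ha with rfl | ha
  · rcases hb with rfl | hb
    · exact G.irrefl hab
    · exact hv b hb hab
  · rcases hb with rfl | hb
    · exact hv a ha hab.symm
    · exact hS a ha b hb hab

lemma isStable_singleton' (G : SimpleGraph V) (v : V) : IsStable G {v} := by
  intro a ha b hb hab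
  simp only [Finset.mem_singleton] at ha hb
  subst ha; subst hb; exact G.irrefl hab

lemma isStable_empty' (G : SimpleGraph V) : IsStable G (∅ : Finset V) := by
  intro a ha; simp at ha

lemma patStable_singleton' (G : SimpleGraph V) (A : Finset V) : PatStable G {A} := by
  intro X hX Y hY hne
  simp only [Finset.mem_singleton] at hX hY
  subst hX; subst hY; exact absurd rfl hne

lemma patStable_empty' (G : SimpleGraph V) : PatStable G (∅ : Finset (Finset V)) := by
  intro X hX; simp at hX

/-- conversely, if the union `P` of the 2-element stable sets of `H[U]`
is fully adjacent to `r` and contained in `A ∈ 𝒰` (or `P = ∅` with `A = ∅`), then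
for every nonnegative non-increasing `d` on stable sets of the pattern, the explicit
choice `σ = d(Ā)`, `γ_r = d(∅̄) − d(Ā)`, `γ_u = d({u}̄) − d(Ā)` for `u ∈ U` adjacent
to `r`, and `γ_u = d({u}̄) − d(∅̄)` otherwise, makes `(H, γ, σ)` linearize `d ∘ bar`. -/
theorem stmt6 (H : SimpleGraph V) (r : V) (U : Finset V)
    (hU : U = Finset.univ.erase r)
    (𝒰 : Finset (Finset V)) (hgrouping : IsGrouping H U 𝒰)
    (A : Finset V) (hA : A ∈ 𝒰 ∨ A = ∅)
    (hPA : U.filter (fun u => ∃ w ∈ U, w ≠ u ∧ ¬ H.Adj u w) ⊆ A)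
    (hPr : ∀ p ∈ U.filter (fun u => ∃ w ∈ U, w ≠ u ∧ ¬ H.Adj u w), H.Adj p r)
    (d : Finset (Finset V) → ℝ) (hd : NonnegNonincr H 𝒰 d) :
    Linearizes H U 𝒰
      (fun v =>
        if v = r then d (bar 𝒰 (∅ : Finset V)) - d (bar 𝒰 A)
        else if H.Adj v r then d (bar 𝒰 {v}) - d (bar 𝒰 A)
        else d (bar 𝒰 {v}) - d (bar 𝒰 (∅ : Finset V)))
      (d (bar 𝒰 A)) d := by
  obtain ⟨hsup, hdisj, hgrp, hfull⟩ := hgrouping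
  have hrU : r ∉ U := by rw [hU]; simp
  -- key inequality: d(Ā) ≤ d(∅̄)
  have hi : d (bar 𝒰 A) ≤ d (bar 𝒰 (∅ : Finset V)) := by
    rw [bar_empty']
    rcases hA with hA' | rfl
    · rw [bar_of_subset' hdisj hA' subset_rfl (hgrp A hA').1]
      exact hd.2 ∅ (Finset.empty_subset _) {A} (by simpa using hA')
        (patStable_empty' H) (patStable_singleton' H A) (Finset.empty_subset _)
    · rw [bar_empty']
  intro T hTU hTstab
  have hrT : r ∉ T := fun h => hrU (hTU h)
  -- structure of admissible S
  have hSform : ∀ S : Finset V, S ∩ U = T → S = T ∨ S = insert r T := by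
    intro S hS
    have hTS : T ⊆ S := by rw [← hS]; exact Finset.inter_subset_left
    have hSsub : S ⊆ insert r T := by
      intro v hv
      by_cases hvr : v = r
      · simp [hvr]
      · have hvU : v ∈ U := by rw [hU]; simp [hvr]
        exact Finset.mem_insert_of_mem
          (by rw [← hS]; exact Finset.mem_inter.mpr ⟨hv, hvU⟩)
    by_cases hrS : r ∈ S
    · right
      refine Finset.Subset.antisymm hSsub (fun v hv => ?_)
      rcases Finset.mem_insert.mp hv with rfl | h
      · exact hrS
      · exact hTS h
    · left
      refine Finset.Subset.antisymm (fun v hv => ?_) hTS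
      rcases Finset.mem_insert.mp (hSsub hv) with rfl | h
      · exact absurd hv hrS
      · exact h
  rcases Finset.eq_empty_or_nonempty T with rfl | ⟨u, huT⟩
  · -- case T = ∅
    constructor
    · refine ⟨{r}, isStable_singleton' H r, ?_, ?_⟩
      · ext v; simp only [Finset.mem_inter, Finset.mem_singleton, Finset.notMem_empty,
          iff_false, not_and]
        rintro rfl; exact hrU
      · simp
    · rintro x ⟨S, hSstab, hSU, rfl⟩
      rcases hSform S hSU with rfl | rfl
      · simpa using sub_nonneg.mpr hi
      · simp
  · by_cases hsub : ∀ x ∈ T, x = u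
    · -- case T = {u}
      have hTu : T = {u} := by
        apply Finset.Subset.antisymm
        · intro x hx; simp [hsub x hx]
        · intro x hx; simp only [Finset.mem_singleton] at hx; subst hx; exact huT
      subst hTu
      have huU : u ∈ U := hTU (Finset.mem_singleton_self u)
      have hur : u ≠ r := fun h => hrU (h ▸ huU)
      have hinter : ({u} : Finset V) ∩ U = {u} :=
        Finset.inter_eq_left.mpr (by simpa using huU)
      by_cases har : H.Adj u r
      · constructor
        · refine ⟨{u}, isStable_singleton' H u, hinter, ?_⟩
          simp only [Finset.sum_singleton]
          rw [if_neg hur, if_pos har]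
        · rintro x ⟨S, hSstab, hSU, rfl⟩
          rcases hSform S hSU with rfl | rfl
          · simp only [Finset.sum_singleton]
            rw [if_neg hur, if_pos har]
          · exact absurd har (hSstab u (by simp) r (by simp))
      · constructor
        · refine ⟨insert r {u}, ?_, ?_, ?_⟩
          · refine (isStable_singleton' H u).insert' (fun x hx => ?_)
            simp only [Finset.mem_singleton] at hx
            subst hx
            exact fun h => har h.symm
          · ext v
            simp only [Finset.mem_inter, Finset.mem_insert, Finset.mem_singleton]
            constructor
            · rintro ⟨rfl | rfl, hvU⟩
              · exact absurd hvU hrU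
              · rfl
            · rintro rfl; exact ⟨Or.inr rfl, huU⟩
          · have hne : r ∉ ({u} : Finset V) := by simp [Ne.symm hur]
            simp only [Finset.sum_insert hne, Finset.sum_singleton]
            rw [if_pos trivial, if_neg hur, if_neg har]
            ring
        · rintro x ⟨S, hSstab, hSU, rfl⟩
          rcases hSform S hSU with rfl | rfl
          · simp only [Finset.sum_singleton]
            rw [if_neg hur, if_neg har]
            linarith
          · have hne : r ∉ ({u} : Finset V) := by simp [Ne.symm hur]
            simp only [Finset.sum_insert hne, Finset.sum_singleton]
            rw [if_pos trivial, if_neg hur, if_neg har]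
            linarith
    · -- case |T| ≥ 2
      push_neg at hsub
      obtain ⟨w, hwT, hwu⟩ := hsub
      have hTP : ∀ v ∈ T, v ∈ U.filter (fun u => ∃ w ∈ U, w ≠ u ∧ ¬ H.Adj u w) := by
        intro v hv
        obtain ⟨z, hzT, hzv⟩ : ∃ z ∈ T, z ≠ v := by
          by_cases hvu : v = u
          · exact ⟨w, hwT, by rw [hvu]; exact hwu⟩
          · exact ⟨u, huT, fun h => hvu h.symm⟩
        exact Finset.mem_filter.mpr ⟨hTU hv, z, hTU hzT, hzv, hTstab v hv z hzT⟩
      have hTA : ∀ v ∈ T, v ∈ A := fun v hv => hPA (hTP v hv)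
      have hTr : ∀ v ∈ T, H.Adj v r := fun v hv => hPr v (hTP v hv)
      have hA𝒰 : A ∈ 𝒰 := by
        rcases hA with h | rfl
        · exact h
        · exact absurd (hTA u huT) (Finset.notMem_empty u)
      have hbarT : bar 𝒰 T = {A} := bar_of_subset' hdisj hA𝒰 (fun v hv => hTA v hv) ⟨u, huT⟩
      have hbarA : bar 𝒰 A = {A} := bar_of_subset' hdisj hA𝒰 subset_rfl ⟨u, hTA u huT⟩
      have hsum : ∀ v ∈ T, (if v = r then d (bar 𝒰 (∅ : Finset V)) - d (bar 𝒰 A)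
          else if H.Adj v r then d (bar 𝒰 {v}) - d (bar 𝒰 A)
          else d (bar 𝒰 {v}) - d (bar 𝒰 (∅ : Finset V))) = 0 := by
        intro v hv
        have hvr : v ≠ r := fun h => hrU (h ▸ hTU hv)
        have hbv : bar 𝒰 {v} = {A} :=
          bar_of_subset' hdisj hA𝒰 (by simpa using hTA v hv) ⟨v, Finset.mem_singleton_self v⟩
        rw [if_neg hvr, if_pos (hTr v hv), hbv, hbarA, sub_self]
      have h0 : d (bar 𝒰 T) - d (bar 𝒰 A) = 0 := by rw [hbarT, hbarA, sub_self]
      constructor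
      · refine ⟨T, hTstab, Finset.inter_eq_left.mpr hTU, ?_⟩
        rw [h0]
        exact (Finset.sum_eq_zero hsum).symm
      · rintro x ⟨S, hSstab, hSU, rfl⟩
        rcases hSform S hSU with rfl | rfl
        · rw [h0]
          exact le_of_eq (Finset.sum_eq_zero hsum)
        · exact absurd (hTr u huT)
            (hSstab u (Finset.mem_insert_of_mem huT) r (Finset.mem_insert_self _ _))
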